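/- arXiv:1404.1728 — 2 statements merged into one kernel-verified Lean document; each statement's English description precedes it below -/
import Mathlib

section
/- Let M1 and M2 be matroids on ground sets E1, E2 with E1 ∩ E2 = {e}, e neither a loop nor a coloop of either matroid, and let f ∈ E1 − e. Then P(M1,M2) − f = P(M1 − f, M2) and P(M1,M2)/f = P(M1/f, M2), where P denotes parallel connection with respect to basepoint e (interpreted via the degenerate conventions if e becomes a loop or coloop of M1 − f or M1/f). -/
open Polynomial

namespace SPPaper

noncomputable section
open Classical

universe u
variable {α : Type u} {V : Type u}

/-- Deletion of a set of elements: `M − X`. -/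
def del (M : Matroid α) (X : Set α) : Matroid α := M.restrict (M.E \ X)

/-- Contraction of a set of elements: `M/X = (M✶ − X)✶`. -/
def con (M : Matroid α) (X : Set α) : Matroid α := (del M.dual X).dual

/-- The rank of a set: the (common) cardinality of maximal independent subsets. -/
def rk (M : Matroid α) (X : Set α) : ℕ :=
  sSup {n | ∃ I, I ⊆ X ∧ M.Indep I ∧ I.ncard = n}

/-- The rank of a matroid. -/
def rank (M : Matroid α) : ℕ := rk M M.E

/-- `e` is a loop of `M` if `{e}` is dependent. -/
def IsLoop (M : Matroid α) (e : α) : Prop := e ∈ M.E ∧ ¬ M.Indep {e}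

/-- A matroid is loopless if it has no loops. -/
def Loopless (M : Matroid α) : Prop := ∀ e, ¬ IsLoop M e

/-- `e` is a coloop of `M` if it lies in every basis. -/
def IsColoop (M : Matroid α) (e : α) : Prop := e ∈ M.E ∧ ∀ B, M.IsBase B → e ∈ B

/-- A circuit of a matroid: a minimal dependent set. -/
def IsCircuit (M : Matroid α) (C : Set α) : Prop := M.Dep C ∧ ∀ D, D ⊂ C → M.Indep D

/-- A matroid is simple if it has no loops and no two-element circuits. -/
def Simple (M : Matroid α) : Prop := Loopless M ∧ ∀ e f : α, ¬ IsCircuit M {e, f}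

/-- `h(M;x) = t(M;x,0)` where `t` is the Tutte polynomial:
`t(M;x,y) = ∑_{A ⊆ E} (x−1)^(r(E)−r(A)) (y−1)^(|A|−r(A))`. -/
def hPoly (M : Matroid α) [Fintype α] : Polynomial ℤ :=
  ∑ A ∈ (Set.toFinite M.E).toFinset.powerset,
    (Polynomial.X - 1) ^ (rank M - rk M (A : Set α)) *
      (-1 : Polynomial ℤ) ^ (A.card - rk M (A : Set α))

/-- The `i`-th entry of the h-vector of the broken circuit complex:
`h(M;x) = ∑_{i=0}^r h_i x^(r−i)`. -/
def hvec (M : Matroid α) [Fintype α] (i : ℕ) : ℤ :=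
  if i ≤ rank M then (hPoly M).coeff (rank M - i) else 0

/-- The beta invariant `β(M) = (−1)^(r(E)) ∑_{A ⊆ E} (−1)^(|A|) r(A)`. -/
def beta (M : Matroid α) [Fintype α] : ℤ :=
  (-1) ^ rank M *
    ∑ A ∈ (Set.toFinite M.E).toFinset.powerset, (-1 : ℤ) ^ A.card * (rk M (A : Set α) : ℤ)

/-- `P` is the direct sum of `M1` and `M2`. -/
def IsDirSumOf (P M1 M2 : Matroid α) : Prop :=
  ∃ h : Disjoint M1.E M2.E, P = Matroid.disjointSum M1 M2 h

/-- A matroid is connected if its ground set is nonempty and it is not the direct sum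
of two matroids on nonempty ground sets. -/
def Connected (M : Matroid α) : Prop :=
  M.E.Nonempty ∧ ¬ ∃ M1 M2 : Matroid α, M1.E.Nonempty ∧ M2.E.Nonempty ∧ IsDirSumOf M M1 M2

/-- `M` is the matroid on ground set `E` whose circuits are exactly the sets satisfying `𝒞`. -/
def HasCircuits (M : Matroid α) (E : Set α) (𝒞 : Set α → Prop) : Prop :=
  M.E = E ∧ ∀ C, IsCircuit M C ↔ 𝒞 C

/-- The circuits of the parallel connection of `M1` and `M2` with basepoint `e`. -/
def PConnCircuit (M1 M2 : Matroid α) (e : α) (C : Set α) : Prop :=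
  IsCircuit M1 C ∨ IsCircuit M2 C ∨
    ∃ C1 C2, IsCircuit M1 C1 ∧ IsCircuit M2 C2 ∧ e ∈ C1 ∧ e ∈ C2 ∧ C = (C1 ∪ C2) \ {e}

/-- The circuits of the series connection of `M1` and `M2` with basepoint `e`. -/
def SConnCircuit (M1 M2 : Matroid α) (e : α) (C : Set α) : Prop :=
  IsCircuit (del M1 {e}) C ∨ IsCircuit (del M2 {e}) C ∨
    ∃ C1 C2, IsCircuit M1 C1 ∧ IsCircuit M2 C2 ∧ e ∈ C1 ∧ e ∈ C2 ∧ C = C1 ∪ C2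

/-- `P` is the parallel connection of `M1` and `M2` with respect to the basepoint `e`
(including the degenerate conventions when `e` is a loop or a coloop). -/
def IsParallelConn (P M1 M2 : Matroid α) (e : α) : Prop :=
  if IsLoop M1 e then IsDirSumOf P M1 (con M2 {e})
  else if IsColoop M1 e then IsDirSumOf P (del M1 {e}) M2
  else if IsLoop M2 e then IsDirSumOf P (con M1 {e}) M2
  else if IsColoop M2 e then IsDirSumOf P M1 (del M2 {e})
  else HasCircuits P (M1.E ∪ M2.E) (PConnCircuit M1 M2 e)

/-- `S` is the series connection of `M1` and `M2` with respect to the basepoint `e`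
(including the degenerate conventions when `e` is a loop or a coloop). -/
def IsSeriesConn (S M1 M2 : Matroid α) (e : α) : Prop :=
  if IsLoop M1 e then IsDirSumOf S (con M1 {e}) M2
  else if IsColoop M1 e then IsDirSumOf S M1 (del M2 {e})
  else if IsLoop M2 e then IsDirSumOf S M1 (con M2 {e})
  else if IsColoop M2 e then IsDirSumOf S (del M1 {e}) M2
  else HasCircuits S (M1.E ∪ M2.E) (SConnCircuit M1 M2 e)

/-- `N` is a two-element circuit. -/
def TwoCircuit (N : Matroid α) : Prop :=
  ∃ e f : α, e ≠ f ∧ N.E = {e, f} ∧ IsCircuit N N.E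

/-- `M` is a series extension of `N`: `M = S(N, C₂)` for a 2-circuit `C₂`. -/
def IsSeriesExtOf (M N : Matroid α) : Prop :=
  ∃ (C : Matroid α) (e : α), TwoCircuit C ∧ N.E ∩ C.E = {e} ∧ IsSeriesConn M N C e

/-- `M` is a parallel extension of `N`: `M = P(N, C₂)` for a 2-circuit `C₂`. -/
def IsParallelExtOf (M N : Matroid α) : Prop :=
  ∃ (C : Matroid α) (e : α), TwoCircuit C ∧ N.E ∩ C.E = {e} ∧ IsParallelConn M N C e

/-- A series-parallel network: a matroid obtainable from a coloop by a sequence of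
series and parallel extensions. -/
inductive IsSPNetwork : Matroid α → Prop
  | coloop (M : Matroid α) (e : α) : M.E = {e} → IsColoop M e → IsSPNetwork M
  | series (M N : Matroid α) : IsSPNetwork N → IsSeriesExtOf M N → IsSPNetwork M
  | parallel (M N : Matroid α) : IsSPNetwork N → IsParallelExtOf M N → IsSPNetwork M

/-- `M` is parallel irreducible at `f`: either `M` is trivial or `M` is not the parallel
connection, with basepoint `f`, of two matroids each having at least two elements. -/
def ParallelIrreducibleAt (M : Matroid α) (f : α) : Prop :=
  M.E.Subsingleton ∨
    ¬ ∃ M1 M2 : Matroid α, M1.E ∩ M2.E = {f} ∧ M1.E.Nontrivial ∧ M2.E.Nontrivial ∧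
        IsParallelConn M M1 M2 f

/-- `M` is parallel irreducible. -/
def ParallelIrreducible (M : Matroid α) : Prop := ∀ f ∈ M.E, ParallelIrreducibleAt M f

/-- `M` is the iterated parallel connection of the list `l` of matroids. -/
inductive IsIterPConn : Matroid α → List (Matroid α) → Prop
  | base (M : Matroid α) : IsIterPConn M [M]
  | step (P M N : Matroid α) (l : List (Matroid α)) (e : α) :
      IsIterPConn P l → P.E ∩ N.E = {e} → IsParallelConn M P N e →
      IsIterPConn M (l ++ [N])

/-- `M` is the cycle matroid of the graph `G` (on the ground set `G.edgeSet`):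
a set of edges is independent iff it contains no cycle. -/
def IsCycleMatroid (M : Matroid (Sym2 V)) (G : SimpleGraph V) : Prop :=
  M.E = G.edgeSet ∧ ∀ X ⊆ M.E, (M.Indep X ↔ (SimpleGraph.fromEdgeSet X).IsAcyclic)

/-- `M` is (isomorphic to) the cycle matroid of the graph `G`. -/
def IsCycleMatroidOf (M : Matroid α) {W : Type} (G : SimpleGraph W) : Prop :=
  ∃ φ : α → Sym2 W, Set.InjOn φ M.E ∧ φ '' M.E = G.edgeSet ∧
    ∀ X ⊆ M.E, (M.Indep X ↔ (SimpleGraph.fromEdgeSet (φ '' X)).IsAcyclic)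

/-- A matroid is graphic if it is isomorphic to the cycle matroid of a graph. -/
def IsGraphic (M : Matroid α) : Prop := ∃ (W : Type) (G : SimpleGraph W), IsCycleMatroidOf M G

/-- A nonempty set of elements, each lying in some circuit, such that every circuit of `M`
containing one of them contains all of them. -/
def SeriesSet (M : Matroid α) (X : Set α) : Prop :=
  X ⊆ M.E ∧ X.Nonempty ∧ (∀ e ∈ X, ∃ C, IsCircuit M C ∧ e ∈ C) ∧
    ∀ C, IsCircuit M C → X ⊆ C ∨ Disjoint X C

/-- A series class: a maximal `SeriesSet`. -/
def SeriesClass (M : Matroid α) (X : Set α) : Prop :=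
  SeriesSet M X ∧ ∀ Y, SeriesSet M Y → X ⊆ Y → X = Y

/-- A removable line of a block `G` (with cycle matroid `M`): a line (a nontrivial path
all of whose internal vertices have degree 2) whose removal (edges together with the
internal vertices) leaves a block. -/
def IsRemovableLine (G : SimpleGraph V) (M : Matroid (Sym2 V)) (X : Set (Sym2 V)) : Prop :=
  ∃ (u v : V) (p : G.Walk u v), p.IsPath ∧ 0 < p.length ∧ X = {e | e ∈ p.edges} ∧
    (∀ w ∈ p.support, w ≠ u → w ≠ v → (G.neighborSet w).ncard = 2) ∧
    ((G.deleteEdges X).induce {w : V | ¬ (w ∈ p.support ∧ w ≠ u ∧ w ≠ v)}).Connected ∧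
    Connected (del M X)

/-- One subdivision step: replace an edge `uv` by a path `u-w-v` through a new vertex `w`. -/
def SubdivStep (G G' : SimpleGraph V) : Prop :=
  ∃ u v w : V, G.Adj u v ∧ w ∉ G.support ∧ w ≠ u ∧ w ≠ v ∧
    G' = SimpleGraph.fromEdgeSet ((G.edgeSet \ {s(u, v)}) ∪ {s(u, w), s(w, v)})

/-- `H` is a subdivision of the complete graph `K₄`. -/
def IsSubdivOfK4 (H : SimpleGraph V) : Prop :=
  ∃ f : Fin 4 ↪ V,
    Relation.ReflTransGen SubdivStep
      (SimpleGraph.fromEdgeSet {s | ∃ i j : Fin 4, i ≠ j ∧ s = s(f i, f j)}) H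

/-!
A set `I` is independent in the parallel connection `P(M₁, M₂)` exactly when `I ∩ E₁` and `I ∩ E₂`
are independent and the basepoint `e` is not spanned by both of them unless `e ∈ I`: a circuit
`(C₁ ∪ C₂) - e` inside `I` is precisely a witness of `e` lying in both closures. This description
sees `M₁` only through independence and closure of `I ∩ E₁`, which commute with deleting `f` and,
after replacing `I` by `I + f`, with contracting `f`. Hence `P − f` and `P / f` have the independent
sets described for `(M₁ − f, M₂)` and `(M₁ / f, M₂)`. Conversely the description determines the
parallel connection, degenerate conventions included: if `e` is a coloop of the first matroid it
yields `(M₁ − e) ⊕ M₂`, and if `e` is a loop it yields `M₁ ⊕ M₂ / e`; otherwise the circuits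
described in `PConnCircuit` form an antichain, so they are exactly the minimal dependent sets.
-/

open Matroid Set

section Bridge

variable {M : Matroid α} {C : Set α} {e : α}

lemma del_eq_delete (M : Matroid α) (X : Set α) : del M X = M ＼ X := rfl

lemma con_eq_contract (M : Matroid α) (X : Set α) : con M X = M ／ X := rfl

lemma isCircuit_iff_isCircuit : IsCircuit M C ↔ M.IsCircuit C := by
  rw [Matroid.isCircuit_iff_forall_ssubset]
  rfl

lemma isLoop_iff_isLoop : IsLoop M e ↔ M.IsLoop e :=
  ⟨fun ⟨he, hni⟩ => (singleton_not_indep he).1 hni,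
    fun h => ⟨h.mem_ground, (singleton_not_indep h.mem_ground).2 h⟩⟩

lemma isColoop_iff_isColoop : IsColoop M e ↔ M.IsColoop e :=
  ⟨fun ⟨_, he⟩ => isColoop_iff_forall_mem_isBase.2 he,
    fun h => ⟨h.mem_ground, fun _ hB => h.mem_of_isBase hB⟩⟩

end Bridge

def HasIndeps (M : Matroid α) (E : Set α) (ℐ : Set α → Prop) : Prop :=
  M.E = E ∧ ∀ I ⊆ E, M.Indep I ↔ ℐ I

section Clutter

variable {M : Matroid α} {E : Set α} {𝒞 : Set α → Prop}

lemma HasCircuits.hasIndeps (h : HasCircuits M E 𝒞) :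
    HasIndeps M E (fun I => ∀ C ⊆ I, ¬ 𝒞 C) := by
  refine ⟨h.1, fun I hI => ?_⟩
  rw [indep_iff_forall_subset_not_isCircuit (h.1 ▸ hI)]
  simp only [← isCircuit_iff_isCircuit, h.2]

lemma HasIndeps.hasCircuits (h : HasIndeps M E (fun I => ∀ C ⊆ I, ¬ 𝒞 C))
    (h𝒞 : IsAntichain (· ⊆ ·) {C | 𝒞 C}) (h𝒞E : ∀ C, 𝒞 C → C ⊆ E) : HasCircuits M E 𝒞 := by
  obtain ⟨hE, hI⟩ := h
  subst hE
  refine ⟨rfl, fun C => ?_⟩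
  rw [isCircuit_iff_isCircuit]
  refine ⟨fun hC => ?_, fun hC => ?_⟩
  · obtain ⟨D, hDC, hD⟩ : ∃ D ⊆ C, 𝒞 D := by
      by_contra! hcon
      exact hC.not_indep ((hI C hC.subset_ground).2 hcon)
    have hDdep : M.Dep D :=
      ⟨fun hDi => (hI D (h𝒞E D hD)).1 hDi D Subset.rfl hD, h𝒞E D hD⟩
    rwa [← hC.eq_of_dep_subset hDdep hDC]
  · rw [isCircuit_iff_forall_ssubset]
    refine ⟨⟨fun hCi => (hI C (h𝒞E C hC)).1 hCi C Subset.rfl hC, h𝒞E C hC⟩,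
      fun D hDC => (hI D (hDC.subset.trans (h𝒞E C hC))).2 fun D' hD'D hD' => ?_⟩
    exact hDC.not_subset (h𝒞.eq hD' hC (hD'D.trans hDC.subset) ▸ hD'D)

end Clutter

def PConnIndep (M1 M2 : Matroid α) (e : α) (I : Set α) : Prop :=
  M1.Indep (I ∩ M1.E) ∧ M2.Indep (I ∩ M2.E) ∧
    (e ∈ M1.closure (I ∩ M1.E) → e ∈ M2.closure (I ∩ M2.E) → e ∈ I)

section PConn

variable {M M1 M2 : Matroid α} {I : Set α} {e : α}

lemma indep_inter_ground_iff_forall_subset_not_isCircuit :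
    M.Indep (I ∩ M.E) ↔ ∀ C ⊆ I, ¬ M.IsCircuit C := by
  rw [indep_iff_forall_subset_not_isCircuit inter_subset_right]
  exact ⟨fun h C hCI hC => h C (subset_inter hCI hC.subset_ground) hC,
    fun h C hCI => h C (hCI.trans inter_subset_left)⟩

lemma forall_subset_not_pConnCircuit_iff :
    (∀ C ⊆ I, ¬ PConnCircuit M1 M2 e C) ↔ PConnIndep M1 M2 e I := by
  simp only [PConnCircuit, isCircuit_iff_isCircuit, not_or, forall_and, PConnIndep,
    ← indep_inter_ground_iff_forall_subset_not_isCircuit, and_congr_right_iff]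
  intro hI1 hI2
  constructor
  · intro h he1 he2
    by_contra heI
    obtain ⟨C1, hC1I, hC1, heC1⟩ :=
      (mem_closure_iff_exists_isCircuit fun h => heI h.1).1 he1
    obtain ⟨C2, hC2I, hC2, heC2⟩ :=
      (mem_closure_iff_exists_isCircuit fun h => heI h.1).1 he2
    refine h _ (fun x hx => ?_) ⟨C1, C2, hC1, hC2, heC1, heC2, rfl⟩
    obtain ⟨hx | hx, hxe⟩ := hx
    · exact ((hC1I hx).resolve_left hxe).1
    · exact ((hC2I hx).resolve_left hxe).1
  · rintro h _ hCI ⟨C1, C2, hC1, hC2, heC1, heC2, rfl⟩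
    have hsub : ∀ {M : Matroid α} {C' : Set α}, M.IsCircuit C' → C' ⊆ C1 ∪ C2 →
        C' \ {e} ⊆ I ∩ M.E := fun hC' hC'C =>
      subset_inter ((sdiff_subset_sdiff_left hC'C).trans hCI) (sdiff_subset.trans hC'.subset_ground)
    have hcl : ∀ {M : Matroid α} {C' : Set α}, M.IsCircuit C' → e ∈ C' → C' ⊆ C1 ∪ C2 →
        e ∈ M.closure (I ∩ M.E) := fun hC' heC' hC'C =>
      closure_subset_closure _ (hsub hC' hC'C) (hC'.mem_closure_sdiff_singleton_of_mem heC')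
    have heI := h (hcl hC1 heC1 subset_union_left) (hcl hC2 heC2 subset_union_right)
    refine hC1.not_indep (hI1.subset fun x hx => ?_)
    obtain rfl | hxe := eq_or_ne x e
    · exact ⟨heI, hC1.subset_ground hx⟩
    · exact hsub hC1 subset_union_left ⟨hx, hxe⟩

end PConn

section Antichain

variable {M1 M2 : Matroid α} {C C1 C2 D : Set α} {e : α}

lemma pConnCircuit_comm : PConnCircuit M1 M2 e C ↔ PConnCircuit M2 M1 e C := by
  unfold PConnCircuit
  constructor <;>
  · rintro (h | h | ⟨C1, C2, hC1, hC2, heC1, heC2, rfl⟩)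
    exacts [Or.inr (Or.inl h), Or.inl h,
      Or.inr (Or.inr ⟨C2, C1, hC2, hC1, heC2, heC1, by rw [union_comm]⟩)]

lemma isLoop_of_isCircuit_sdiff_subset (hE : M1.E ∩ M2.E ⊆ {e}) (hC : M2.IsCircuit C)
    (hCE : C \ {e} ⊆ M1.E) : M2.IsLoop e := by
  have hCe : C ⊆ {e} := fun x hx => by
    by_contra hxe
    exact hxe (hE ⟨hCE ⟨hx, hxe⟩, hC.subset_ground hx⟩)
  rw [← singleton_isCircuit, ← hC.nonempty.subset_singleton_iff.1 hCe]
  exact hC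

lemma union_sdiff_inter_ground_subset (hE : M1.E ∩ M2.E ⊆ {e}) (hC2 : C2 ⊆ M2.E) :
    ((C1 ∪ C2) \ {e}) ∩ M1.E ⊆ C1 := by
  rintro x ⟨⟨hx | hx, hxe⟩, hx1⟩
  · exact hx
  · exact absurd (hE ⟨hx1, hC2 hx⟩) hxe

lemma eq_of_isCircuit_subset_pConnCircuit (hE : M1.E ∩ M2.E ⊆ {e}) (he1 : M1.IsNonloop e)
    (hC : M1.IsCircuit C) (hD : PConnCircuit M1 M2 e D) (hCD : C ⊆ D) : C = D := by
  rcases hD with hD | hD | ⟨D1, D2, hD1, hD2, heD1, heD2, rfl⟩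
  · exact hC.eq_of_subset_isCircuit (isCircuit_iff_isCircuit.1 hD) hCD
  · refine absurd (isLoop_of_isCircuit_sdiff_subset (inter_comm M1.E _ ▸ hE) hC ?_) he1.not_isLoop
    exact sdiff_subset.trans (hCD.trans (isCircuit_iff_isCircuit.1 hD).subset_ground)
  · rw [isCircuit_iff_isCircuit] at hD1 hD2
    have hCD1 : C = D1 := hC.eq_of_subset_isCircuit hD1
      ((subset_inter hCD hC.subset_ground).trans
        (union_sdiff_inter_ground_subset hE hD2.subset_ground))
    exact absurd (hCD (hCD1 ▸ heD1)) fun h => h.2 rfl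

lemma eq_of_union_sdiff_subset_pConnCircuit (hE : M1.E ∩ M2.E ⊆ {e}) (he1 : M1.IsNonloop e)
    (he2 : M2.IsNonloop e) (hC1 : M1.IsCircuit C1) (hC2 : M2.IsCircuit C2) (heC1 : e ∈ C1)
    (heC2 : e ∈ C2) (hD : PConnCircuit M1 M2 e D) (hCD : (C1 ∪ C2) \ {e} ⊆ D) :
    (C1 ∪ C2) \ {e} = D := by
  have hE' : M2.E ∩ M1.E ⊆ {e} := inter_comm M1.E _ ▸ hE
  rcases hD with hD | hD | ⟨D1, D2, hD1, hD2, heD1, heD2, rfl⟩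
  · refine absurd (isLoop_of_isCircuit_sdiff_subset hE hC2 ?_) he2.not_isLoop
    exact (sdiff_subset_sdiff_left subset_union_right).trans
      (hCD.trans (isCircuit_iff_isCircuit.1 hD).subset_ground)
  · refine absurd (isLoop_of_isCircuit_sdiff_subset hE' hC1 ?_) he1.not_isLoop
    exact (sdiff_subset_sdiff_left subset_union_left).trans
      (hCD.trans (isCircuit_iff_isCircuit.1 hD).subset_ground)
  · rw [isCircuit_iff_isCircuit] at hD1 hD2
    have hsub : ∀ {N : Matroid α} {C' D' : Set α}, C' ⊆ N.E → e ∈ D' →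
        ((C1 ∪ C2) \ {e}) ∩ N.E ⊆ D' → C' ⊆ C1 ∪ C2 → C' ⊆ D' := by
      intro N C' D' hC'N heD' hND hC'C x hx
      obtain rfl | hxe := eq_or_ne x e
      · exact heD'
      · exact hND ⟨⟨hC'C hx, hxe⟩, hC'N hx⟩
    have h1 : C1 = D1 := hC1.eq_of_subset_isCircuit hD1 <| hsub hC1.subset_ground heD1
      ((inter_subset_inter_left _ hCD).trans
        (union_sdiff_inter_ground_subset hE hD2.subset_ground)) subset_union_left
    have h2 : C2 = D2 := hC2.eq_of_subset_isCircuit hD2 <| hsub hC2.subset_ground heD2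
      ((inter_subset_inter_left _ hCD).trans (union_comm D1 D2 ▸
        union_sdiff_inter_ground_subset hE' hD1.subset_ground)) subset_union_right
    rw [h1, h2]

lemma isAntichain_pConnCircuit (hE : M1.E ∩ M2.E ⊆ {e}) (he1 : M1.IsNonloop e)
    (he2 : M2.IsNonloop e) : IsAntichain (· ⊆ ·) {C | PConnCircuit M1 M2 e C} := by
  intro C hC D hD hne hCD
  refine hne ?_
  rcases hC with hC | hC | ⟨C1, C2, hC1, hC2, heC1, heC2, rfl⟩
  · exact eq_of_isCircuit_subset_pConnCircuit hE he1 (isCircuit_iff_isCircuit.1 hC) hD hCD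
  · exact eq_of_isCircuit_subset_pConnCircuit (inter_comm M1.E _ ▸ hE) he2
      (isCircuit_iff_isCircuit.1 hC) (pConnCircuit_comm.1 hD) hCD
  · rw [isCircuit_iff_isCircuit] at hC1 hC2
    exact eq_of_union_sdiff_subset_pConnCircuit hE he1 he2 hC1 hC2 heC1 heC2 hD hCD

end Antichain

section Degenerate

variable {N1 N2 : Matroid α} {I : Set α} {e : α}

lemma pConnIndep_iff_of_isColoop (he : N1.IsColoop e) :
    PConnIndep N1 N2 e I ↔ (N1 ＼ {e}).Indep (I ∩ (N1 ＼ {e}).E) ∧ N2.Indep (I ∩ N2.E) := by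
  have h1 : (N1 ＼ {e}).Indep (I ∩ (N1 ＼ {e}).E) ↔ N1.Indep (I ∩ N1.E) := by
    rw [delete_indep_iff, delete_ground, ← inter_sdiff_assoc,
      sdiff_indep_iff_indep_of_subset_coloops (singleton_subset_iff.2 he),
      and_iff_left disjoint_sdiff_left]
  rw [PConnIndep, h1, and_iff_left fun h _ => (he.mem_of_mem_closure h).1]

lemma pConnIndep_iff_of_isLoop (he1 : N1.IsLoop e) (he2 : N2.IsNonloop e) :
    PConnIndep N1 N2 e I ↔ N1.Indep (I ∩ N1.E) ∧ (N2 ／ {e}).Indep (I ∩ (N2 ／ {e}).E) := by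
  rw [PConnIndep, he2.contractElem_indep_iff, contract_ground, ← inter_sdiff_assoc,
    and_congr_right_iff]
  intro hI1
  have heI : e ∉ I := fun heI => he1.notMem_of_indep hI1 ⟨heI, he1.mem_ground⟩
  rw [sdiff_singleton_eq_self fun h => heI h.1, imp_iff_right (he1.mem_closure _)]
  refine ⟨fun ⟨hI2, hcl⟩ => ?_, fun ⟨_, hI2⟩ => ?_⟩
  · exact ⟨fun h => heI h.1,
      (hI2.insert_indep_iff_of_notMem fun h => heI h.1).2 ⟨he2.mem_ground, mt hcl heI⟩⟩
  · have hI2' := hI2.subset (subset_insert _ _)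
    refine ⟨hI2', fun hcl => absurd hcl ?_⟩
    exact ((hI2'.insert_indep_iff_of_notMem fun h => heI h.1).1 hI2).2

end Degenerate

section Characterization

variable {Q N1 N2 : Matroid α} {e : α}

lemma union_sdiff_singleton_of_mem {A B : Set α} (he : e ∈ A) : A ∪ (B \ {e}) = A ∪ B := by
  rw [← union_sdiff_self, sdiff_sdiff_comm, sdiff_singleton_eq_self fun h => h.2 he,
    union_sdiff_self]

lemma pConnCircuit_subset_ground {C : Set α} (hC : PConnCircuit N1 N2 e C) :
    C ⊆ N1.E ∪ N2.E := by
  simp only [PConnCircuit, isCircuit_iff_isCircuit] at hC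
  rcases hC with hC | hC | ⟨C1, C2, hC1, hC2, -, -, rfl⟩
  · exact hC.subset_ground.trans subset_union_left
  · exact hC.subset_ground.trans subset_union_right
  · exact sdiff_subset.trans (union_subset_union hC1.subset_ground hC2.subset_ground)

theorem HasIndeps.isParallelConn (hQ : HasIndeps Q (N1.E ∪ N2.E) (PConnIndep N1 N2 e))
    (hE : N1.E ∩ N2.E ⊆ {e}) (he1 : e ∈ N1.E) (he2 : N2.IsNonloop e)
    (hc2 : ¬ N2.IsColoop e) : IsParallelConn Q N1 N2 e := by
  obtain ⟨hQE, hQI⟩ := hQ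
  unfold IsParallelConn
  simp only [isLoop_iff_isLoop, isColoop_iff_isColoop, del_eq_delete, con_eq_contract,
    if_neg he2.not_isLoop, if_neg hc2]
  split_ifs with hl1 hc1
  · have hground : N1.E ∪ (N2 ／ {e}).E = N1.E ∪ N2.E := by
      rw [contract_ground, union_sdiff_singleton_of_mem he1]
    refine ⟨disjoint_left.2 fun x h1 h2 => h2.2 (hE ⟨h1, h2.1⟩), ext_indep ?_ fun I hI => ?_⟩
    · rw [hQE, disjointSum_ground_eq, hground]
    · rw [hQE] at hI
      rw [hQI I hI, pConnIndep_iff_of_isLoop hl1 he2, disjointSum_indep_iff, hground,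
        and_iff_left hI]
  · have hground : (N1 ＼ {e}).E ∪ N2.E = N1.E ∪ N2.E := by
      rw [delete_ground, union_comm, union_sdiff_singleton_of_mem he2.mem_ground, union_comm]
    refine ⟨disjoint_left.2 fun x h1 h2 => h1.2 (hE ⟨h1.1, h2⟩), ext_indep ?_ fun I hI => ?_⟩
    · rw [hQE, disjointSum_ground_eq, hground]
    · rw [hQE] at hI
      rw [hQI I hI, pConnIndep_iff_of_isColoop hc1, disjointSum_indep_iff, hground,
        and_iff_left hI]
  · refine HasIndeps.hasCircuits ⟨hQE, fun I hI => (hQI I hI).trans ?_⟩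
      (isAntichain_pConnCircuit hE ((not_isLoop_iff he1).1 hl1) he2)
      fun C => pConnCircuit_subset_ground
    exact forall_subset_not_pConnCircuit_iff.symm

end Characterization

section Minors

variable {P M1 M2 : Matroid α} {I J : Set α} {e f : α}

lemma pConnIndep_delete_iff (hef : e ≠ f) (hfI : f ∉ I) :
    PConnIndep (M1 ＼ {f}) M2 e I ↔ PConnIndep M1 M2 e I := by
  have hI1 : I ∩ (M1 ＼ {f}).E = I ∩ M1.E := by
    rw [delete_ground, ← inter_sdiff_assoc, sdiff_singleton_eq_self fun h => hfI h.1]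
  have hdisj : Disjoint (I ∩ M1.E) {f} := disjoint_singleton_right.2 fun h => hfI h.1
  rw [PConnIndep, PConnIndep, hI1, delete_indep_iff, and_iff_left hdisj,
    delete_closure_eq_of_disjoint _ hdisj, mem_sdiff, mem_singleton_iff, and_iff_left hef]

lemma pConnIndep_contract_iff (hf : M1.IsNonloop f) (hfE2 : f ∉ M2.E) (hef : e ≠ f)
    (hfJ : f ∉ J) : PConnIndep (M1 ／ {f}) M2 e J ↔ PConnIndep M1 M2 e (insert f J) := by
  have hJ1 : J ∩ (M1 ／ {f}).E = J ∩ M1.E := by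
    rw [contract_ground, ← inter_sdiff_assoc, sdiff_singleton_eq_self fun h => hfJ h.1]
  rw [PConnIndep, PConnIndep, hJ1, insert_inter_of_mem hf.mem_ground,
    insert_inter_of_notMem hfE2, hf.contractElem_indep_iff, contract_closure_eq,
    union_singleton, mem_sdiff, mem_singleton_iff, mem_insert_iff,
    and_iff_right fun h => hfJ h.1, and_iff_left hef, or_iff_right hef]

lemma HasIndeps.pConn_delete (hP : HasIndeps P (M1.E ∪ M2.E) (PConnIndep M1 M2 e))
    (hef : e ≠ f) (hfE2 : f ∉ M2.E) :
    HasIndeps (P ＼ {f}) ((M1 ＼ {f}).E ∪ M2.E) (PConnIndep (M1 ＼ {f}) M2 e) := by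
  obtain ⟨hPE, hPI⟩ := hP
  have hE : (M1 ＼ {f}).E ∪ M2.E = (M1.E ∪ M2.E) \ {f} := by
    rw [delete_ground, union_sdiff_distrib, sdiff_singleton_eq_self hfE2]
  refine ⟨by rw [delete_ground, hE, hPE], fun I hI => ?_⟩
  rw [hE] at hI
  have hfI : f ∉ I := fun h => (hI h).2 rfl
  rw [delete_indep_iff, hPI I (hI.trans sdiff_subset), pConnIndep_delete_iff hef hfI,
    and_iff_left (disjoint_singleton_right.2 hfI)]

lemma HasIndeps.pConn_contract (hP : HasIndeps P (M1.E ∪ M2.E) (PConnIndep M1 M2 e))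
    (he2 : M2.IsNonloop e) (hef : e ≠ f) (hf : f ∈ M1.E) (hfE2 : f ∉ M2.E) :
    HasIndeps (P ／ {f}) ((M1 ／ {f}).E ∪ M2.E) (PConnIndep (M1 ／ {f}) M2 e) := by
  have hfP : {f} ⊆ M1.E ∪ M2.E := singleton_subset_iff.2 (Or.inl hf)
  have hPf : P.Indep {f} ↔ M1.IsNonloop f := by
    rw [hP.2 {f} hfP, PConnIndep, singleton_inter_of_mem hf, singleton_inter_eq_empty.2 hfE2,
      closure_empty, indep_singleton, and_iff_left_iff_imp]
    exact fun _ => ⟨M2.empty_indep, fun _ he => absurd he he2.not_isLoop⟩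
  by_cases hfl : M1.IsLoop f
  · have hfPl : P.IsLoop f := by
      rw [← singleton_not_indep (hP.1 ▸ hfP rfl), hPf]
      exact hfl.not_isNonloop
    rw [contract_eq_delete_of_subset_loops (singleton_subset_iff.2 hfl),
      contract_eq_delete_of_subset_loops (singleton_subset_iff.2 hfPl)]
    exact hP.pConn_delete hef hfE2
  have hf1 : M1.IsNonloop f := (not_isLoop_iff hf).1 hfl
  obtain ⟨hPE, hPI⟩ := hP
  have hE : (M1 ／ {f}).E ∪ M2.E = (M1.E ∪ M2.E) \ {f} := by
    rw [contract_ground, union_sdiff_distrib, sdiff_singleton_eq_self hfE2]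
  refine ⟨by rw [contract_ground, hE, hPE], fun J hJ => ?_⟩
  rw [hE] at hJ
  have hfJ : f ∉ J := fun h => (hJ h).2 rfl
  rw [(indep_singleton.1 (hPf.2 hf1)).contractElem_indep_iff, and_iff_right hfJ,
    hPI _ (insert_subset (hfP rfl) (hJ.trans sdiff_subset)),
    pConnIndep_contract_iff hf1 hfE2 hef hfJ]

end Minors

/-- for `f ∈ E1 − e`, `P(M1,M2) − f = P(M1 − f, M2)` and
`P(M1,M2)/f = P(M1/f, M2)` (with the degenerate conventions built into
`IsParallelConn`). -/
theorem stmt5 (M1 M2 P : Matroid α) (e : α)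
    (hE : M1.E ∩ M2.E = {e})
    (hl1 : ¬ IsLoop M1 e) (hc1 : ¬ IsColoop M1 e)
    (hl2 : ¬ IsLoop M2 e) (hc2 : ¬ IsColoop M2 e)
    (hP : IsParallelConn P M1 M2 e)
    (f : α) (hf : f ∈ M1.E) (hfe : f ≠ e) :
    IsParallelConn (del P {f}) (del M1 {f}) M2 e ∧
    IsParallelConn (con P {f}) (con M1 {f}) M2 e := by
  rw [IsParallelConn, if_neg hl1, if_neg hc1, if_neg hl2, if_neg hc2] at hP
  have hPI : HasIndeps P (M1.E ∪ M2.E) (PConnIndep M1 M2 e) := by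
    simpa only [forall_subset_not_pConnCircuit_iff] using hP.hasIndeps
  have he : e ∈ M1.E ∩ M2.E := hE.symm.subset rfl
  have he2 : M2.IsNonloop e := (not_isLoop_iff he.2).1 (isLoop_iff_isLoop.not.1 hl2)
  have hc2' : ¬ M2.IsColoop e := isColoop_iff_isColoop.not.1 hc2
  have hfE2 : f ∉ M2.E := fun h => hfe (hE.subset ⟨hf, h⟩)
  have hE' : (M1.E \ {f}) ∩ M2.E ⊆ {e} := (inter_subset_inter_left _ sdiff_subset).trans hE.subset
  have he1 : e ∈ M1.E \ {f} := ⟨he.1, hfe.symm⟩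
  exact ⟨(hPI.pConn_delete hfe.symm hfE2).isParallelConn hE' he1 he2 hc2',
    (hPI.pConn_contract he2 hfe.symm hf hfE2).isParallelConn hE' he1 he2 hc2'⟩

end

end SPPaper
end

section
/- Let M be a simple graphic matroid of rank r on n elements, and let (h_0,…,h_r) be the h-vector of its broken circuit complex. Then h_2 = C(n−r+1, 2) − t(M), where t(M) is the number of 3-element circuits of M and C(·,·) is a binomial coefficient. -/
open Polynomial

namespace SPPaper

noncomputable section
open Classical

universe u
variable {α : Type u} {V : Type u}

/-!
Expanding `t(M; x, 0)` gives `h₂ = ∑_{A ⊆ E} (-1)^|A| C(r - r(A), r - 2)`, so only sets of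
rank at most two contribute. In a simple matroid these are the sets with at most two elements
and the three-element circuits, since a graphic matroid has no four-element set of rank two:
two triangles sharing two edges coincide, as the mod-2 incidence vectors of the edges of a
triangle sum to zero. Hence `h₂ = C(r, 2) - n (r - 1) + C(n, 2) - t(M) = C(n - r + 1, 2) - t(M)`.
-/

lemma sum_powerset_eq_sum_range_powersetCard {β : Type*} [AddCommMonoid β] (s : Finset α)
    (f : Finset α → β) {N : ℕ} (hf : ∀ t ⊆ s, N ≤ t.card → f t = 0) :
    ∑ t ∈ s.powerset, f t = ∑ j ∈ Finset.range N, ∑ t ∈ s.powersetCard j, f t := by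
  have hlarge : ∀ j ≥ N, ∑ t ∈ s.powersetCard j, f t = 0 := fun j hj =>
    Finset.sum_eq_zero fun t ht =>
      hf t (Finset.mem_powersetCard.mp ht).1 ((Finset.mem_powersetCard.mp ht).2 ▸ hj)
  have hempty : ∀ j ≥ s.card + 1, ∑ t ∈ s.powersetCard j, f t = 0 := fun j hj => by
    rw [Finset.powersetCard_eq_empty.mpr (by omega), Finset.sum_empty]
  rw [Finset.sum_powerset, ← Finset.eventually_constant_sum hempty (Nat.le_add_right _ N),
    Finset.eventually_constant_sum hlarge (Nat.le_add_left _ _)]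

lemma ncard_setOf_ncard_eq (s : Finset α) (p : Set α → Prop) (hp : ∀ C, p C → C ⊆ s) (k : ℕ) :
    {C : Set α | p C ∧ C.ncard = k}.ncard =
      ((s.powersetCard k).filter (fun A : Finset α => p A)).card := by
  have himage : {C : Set α | p C ∧ C.ncard = k} =
      (↑) '' ((s.powersetCard k).filter (fun A : Finset α => p A) : Set (Finset α)) := by
    ext C
    simp only [Set.mem_ofPred_eq, Set.mem_image, Finset.coe_filter, Finset.mem_powersetCard]
    constructor
    · rintro ⟨hC, rfl⟩
      have hfin : C.Finite := s.finite_toSet.subset (hp C hC)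
      exact ⟨hfin.toFinset, ⟨⟨by simpa using hp C hC, (Set.ncard_eq_toFinset_card C hfin).symm⟩,
        by simpa using hC⟩, by simp⟩
    · rintro ⟨A, ⟨⟨-, rfl⟩, hA⟩, rfl⟩
      exact ⟨hA, Set.ncard_coe_finset A⟩
  rw [himage, Set.ncard_image_of_injective _ Finset.coe_injective, Set.ncard_coe_finset]

lemma choose_two_sub_mul_add_choose_two (r m : ℕ) :
    (r.choose 2 : ℤ) - (r + m) * (r - 1) + ((r + m).choose 2 : ℕ) = ((m + 1).choose 2 : ℕ) := by
  apply Int.cast_injective (α := ℚ)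
  push_cast [Nat.cast_choose_two]
  ring

lemma coeff_X_sub_one_pow (N k : ℕ) :
    ((X - 1 : ℤ[X]) ^ N).coeff k = (-1) ^ (N - k) * (N.choose k : ℤ) := by
  rw [show (X - 1 : ℤ[X]) = X + C (-1) by simp [sub_eq_add_neg], coeff_X_add_C_pow]

section Rank

variable {M : Matroid α} [M.Finite] {X I : Set α}

lemma rk_bddAbove (M : Matroid α) [M.Finite] (X : Set α) :
    BddAbove {n | ∃ I, I ⊆ X ∧ M.Indep I ∧ I.ncard = n} :=
  ⟨M.E.ncard, by
    rintro _ ⟨I, -, hI, rfl⟩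
    exact Set.ncard_le_ncard hI.subset_ground M.ground_finite⟩

lemma exists_indep_ncard_eq_rk (M : Matroid α) [M.Finite] (X : Set α) :
    ∃ I ⊆ X, M.Indep I ∧ I.ncard = rk M X :=
  Nat.sSup_mem (s := {n | ∃ I, I ⊆ X ∧ M.Indep I ∧ I.ncard = n})
    ⟨0, ∅, Set.empty_subset X, M.empty_indep, Set.ncard_empty α⟩ (rk_bddAbove M X)

lemma ncard_le_rk_of_indep (hI : M.Indep I) (hIX : I ⊆ X) : I.ncard ≤ rk M X :=
  le_csSup (rk_bddAbove M X) ⟨I, hIX, hI, rfl⟩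

lemma rk_le_ncard (hX : X.Finite) : rk M X ≤ X.ncard := by
  obtain ⟨I, hIX, -, hI⟩ := exists_indep_ncard_eq_rk M X
  exact hI ▸ Set.ncard_le_ncard hIX hX

lemma rk_le_rank (hX : X ⊆ M.E) : rk M X ≤ rank M := by
  obtain ⟨I, hIX, hI, hcard⟩ := exists_indep_ncard_eq_rk M X
  exact hcard ▸ ncard_le_rk_of_indep hI (hIX.trans hX)

lemma rk_eq_ncard_of_indep (hI : M.Indep I) : rk M I = I.ncard :=
  (rk_le_ncard (M.ground_finite.subset hI.subset_ground)).antisymm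
    (ncard_le_rk_of_indep hI subset_rfl)

lemma indep_of_rk_eq_ncard (hX : X.Finite) (h : rk M X = X.ncard) : M.Indep X := by
  obtain ⟨I, hIX, hI, hcard⟩ := exists_indep_ncard_eq_rk M X
  rwa [Set.eq_of_subset_of_ncard_le hIX (by omega) hX] at hI

end Rank

lemma isCircuit_iff {M : Matroid α} {C : Set α} : IsCircuit M C ↔ M.IsCircuit C :=
  Matroid.isCircuit_iff_forall_ssubset.symm

section Simple

variable {M : Matroid α} [M.Finite] {X : Set α}

lemma Simple.indep_of_ncard_le_two (hs : Simple M) (hX : X ⊆ M.E) (hX2 : X.ncard ≤ 2) :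
    M.Indep X := by
  by_contra hdep
  obtain ⟨C, hCX, hC⟩ := ((Matroid.not_indep_iff hX).mp hdep).exists_isCircuit_subset
  have hC2 : C.ncard ≤ 2 :=
    (Set.ncard_le_ncard hCX (M.ground_finite.subset hX)).trans hX2
  obtain ⟨e, f, rfl⟩ : ∃ e f, C = {e, f} := by
    interval_cases h : C.ncard
    · exact absurd ((Set.ncard_eq_zero (M.ground_finite.subset (hCX.trans hX))).mp h)
        hC.nonempty.ne_empty
    · obtain ⟨e, rfl⟩ := Set.ncard_eq_one.mp h
      exact ⟨e, e, Set.pair_eq_singleton e |>.symm⟩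
    · obtain ⟨e, f, -, rfl⟩ := Set.ncard_eq_two.mp h
      exact ⟨e, f, rfl⟩
  exact hs.2 e f (isCircuit_iff.mpr hC)

lemma Simple.rk_eq_ncard_of_ncard_le_two (hs : Simple M) (hX : X ⊆ M.E) (hX2 : X.ncard ≤ 2) :
    rk M X = X.ncard :=
  rk_eq_ncard_of_indep (hs.indep_of_ncard_le_two hX hX2)

lemma Simple.two_le_rk (hs : Simple M) (hX : X ⊆ M.E) (hX2 : 2 ≤ X.ncard) : 2 ≤ rk M X := by
  obtain ⟨Y, hYX, hY⟩ := Set.exists_subset_card_eq hX2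
  exact hY ▸ ncard_le_rk_of_indep (hs.indep_of_ncard_le_two (hYX.trans hX) hY.le) hYX

lemma Simple.rk_of_ncard_eq_three (hs : Simple M) (hX : X ⊆ M.E) (hX3 : X.ncard = 3) :
    rk M X = if IsCircuit M X then 2 else 3 := by
  have hfin : X.Finite := M.ground_finite.subset hX
  split_ifs with hC
  · have := rk_le_ncard (M := M) hfin
    have := hs.two_le_rk hX (by omega)
    have : rk M X ≠ 3 := fun h => hC.1.not_indep (indep_of_rk_eq_ncard hfin (by omega))
    omega
  · have hI : M.Indep X := by
      by_contra hdep
      refine hC ⟨(Matroid.not_indep_iff hX).mp hdep, fun D hD => ?_⟩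
      have := Set.ncard_lt_ncard hD hfin
      exact hs.indep_of_ncard_le_two (hD.subset.trans hX) (by omega)
    rw [rk_eq_ncard_of_indep hI, hX3]

lemma Simple.sum_powersetCard_of_le_two {β : Type*} [AddCommMonoid β] (hs : Simple M)
    {E : Finset α} (hE : (E : Set α) ⊆ M.E) (f : ℕ → ℕ → β) {j : ℕ} (hj : j ≤ 2) :
    ∑ A ∈ E.powersetCard j, f A.card (rk M A) = E.card.choose j • f j j := by
  rw [Finset.sum_congr rfl fun A hA => ?_, Finset.sum_const, Finset.card_powersetCard]
  obtain ⟨hAE, rfl⟩ := Finset.mem_powersetCard.mp hA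
  rw [hs.rk_eq_ncard_of_ncard_le_two ((Finset.coe_subset.mpr hAE).trans hE) (by simpa using hj),
    Set.ncard_coe_finset]

lemma Simple.sum_powersetCard_three {β : Type*} [AddCommMonoid β] (hs : Simple M)
    {E : Finset α} (hE : (E : Set α) = M.E) (f : ℕ → ℕ → β) (hf : 3 ≤ rank M → f 3 3 = 0) :
    ∑ A ∈ E.powersetCard 3, f A.card (rk M A) =
      {C : Set α | IsCircuit M C ∧ C.ncard = 3}.ncard • f 3 2 := by
  have hrk : ∀ A ∈ E.powersetCard 3, rk M A = if IsCircuit M A then 2 else 3 := fun A hA =>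
    hs.rk_of_ncard_eq_three (hE ▸ Finset.coe_subset.mpr (Finset.mem_powersetCard.mp hA).1)
      (by simpa using (Finset.mem_powersetCard.mp hA).2)
  rw [ncard_setOf_ncard_eq E _ (fun C hC => hE ▸ hC.1.subset_ground),
    ← Finset.sum_filter_add_sum_filter_not _ (fun A : Finset α => IsCircuit M A),
    Finset.sum_eq_zero (s := Finset.filter (fun A : Finset α => ¬ IsCircuit M A) _), add_zero,
    ← Finset.sum_const]
  · refine Finset.sum_congr rfl fun A hA => ?_
    obtain ⟨hA3, hC⟩ := Finset.mem_filter.mp hA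
    rw [hrk A hA3, if_pos hC, (Finset.mem_powersetCard.mp hA3).2]
  · intro A hA
    obtain ⟨hA3, hC⟩ := Finset.mem_filter.mp hA
    have hrank :=
      rk_le_rank (M := M) (hE ▸ Finset.coe_subset.mpr (Finset.mem_powersetCard.mp hA3).1)
    rw [hrk A hA3, if_neg hC] at hrank ⊢
    rw [(Finset.mem_powersetCard.mp hA3).2, hf hrank]

end Simple

section Graphic

variable {W : Type*}

def edgeVec (e : Sym2 W) : W → ZMod 2 := fun w => if w ∈ e then 1 else 0

lemma edgeVec_injective : Function.Injective (edgeVec (W := W)) := fun e f h =>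
  Sym2.ext fun w => by
    have := congrFun h w
    simp only [edgeVec] at this
    split_ifs at this <;> simp_all

lemma edgeVec_mk_of_ne {u v : W} (huv : u ≠ v) :
    edgeVec s(u, v) = Pi.single u 1 + Pi.single v 1 := by
  funext w
  by_cases hu : w = u <;> by_cases hv : w = v <;> simp_all [edgeVec]

lemma single_add_single_self (v : W) :
    (Pi.single v 1 : W → ZMod 2) + Pi.single v 1 = 0 := by
  rw [← Pi.single_add, show (1 + 1 : ZMod 2) = 0 by decide, Pi.single_zero]

lemma sum_edgeVec_edges {G : SimpleGraph W} {u v : W} (p : G.Walk u v) :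
    (p.edges.map edgeVec).sum = Pi.single u 1 + Pi.single v 1 := by
  induction p with
  | nil => simpa using (single_add_single_self _).symm
  | cons h p ih =>
    rw [SimpleGraph.Walk.edges_cons, List.map_cons, List.sum_cons, ih, edgeVec_mk_of_ne h.ne]
    funext w
    simp only [Pi.add_apply, Pi.single_apply]
    split_ifs <;> decide

lemma edgeVec_add_add_eq_zero {e₁ e₂ e₃ : Sym2 W} (h₁₂ : e₁ ≠ e₂) (h₁₃ : e₁ ≠ e₃)
    (h₂₃ : e₂ ≠ e₃) (hcyc : ¬ (SimpleGraph.fromEdgeSet {e₁, e₂, e₃}).IsAcyclic) :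
    edgeVec e₁ + edgeVec e₂ + edgeVec e₃ = 0 := by
  obtain ⟨v, p, hp⟩ : ∃ v, ∃ p : (SimpleGraph.fromEdgeSet {e₁, e₂, e₃}).Walk v v, p.IsCycle := by
    simpa [SimpleGraph.IsAcyclic] using hcyc
  have hnodup := hp.edges_nodup
  -- a cycle has at least three edges, all taken from `{e₁, e₂, e₃}`
  have hedges : p.edges.toFinset = {e₁, e₂, e₃} := by
    refine Finset.eq_of_subset_of_card_le (fun e he => ?_) ?_
    · have := (p.edges_subset_edgeSet (List.mem_toFinset.mp he))
      simp only [SimpleGraph.edgeSet_fromEdgeSet, Set.mem_sdiff] at this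
      simpa using this.1
    · rw [List.toFinset_card_of_nodup hnodup, SimpleGraph.Walk.length_edges]
      exact (Finset.card_le_three).trans hp.three_le_length
  have hsum := sum_edgeVec_edges p
  rw [← List.sum_toFinset _ hnodup, hedges, Finset.sum_insert (by simp [h₁₂, h₁₃]),
    Finset.sum_insert (by simp [h₂₃]), Finset.sum_singleton, ← add_assoc] at hsum
  rw [hsum, single_add_single_self]

end Graphic

lemma IsGraphic.eq_of_not_indep {M : Matroid α} (hg : IsGraphic M) {a b c d : α}
    (ha : a ∈ M.E) (hb : b ∈ M.E) (hc : c ∈ M.E) (hd : d ∈ M.E)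
    (hab : a ≠ b) (hac : a ≠ c) (hbc : b ≠ c) (had : a ≠ d) (hbd : b ≠ d)
    (hc_dep : ¬ M.Indep {a, b, c}) (hd_dep : ¬ M.Indep {a, b, d}) : c = d := by
  obtain ⟨W, G, φ, hφ, -, hindep⟩ := hg
  have triangle : ∀ x ∈ M.E, x ≠ a → x ≠ b → ¬ M.Indep {a, b, x} →
      edgeVec (φ a) + edgeVec (φ b) + edgeVec (φ x) = 0 := by
    intro x hx hxa hxb hdep
    rw [hindep _ (by simp [Set.insert_subset_iff, ha, hb, hx]), Set.image_insert_eq,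
      Set.image_insert_eq, Set.image_singleton] at hdep
    exact edgeVec_add_add_eq_zero (hφ.ne ha hb hab) (hφ.ne ha hx hxa.symm)
      (hφ.ne hb hx hxb.symm) hdep
  have hcd := (triangle c hc hac.symm hbc.symm hc_dep).trans
    (triangle d hd had.symm hbd.symm hd_dep).symm
  exact hφ hc hd (edgeVec_injective (add_left_cancel hcd))

lemma IsGraphic.three_le_rk {M : Matroid α} [M.Finite] (hg : IsGraphic M) {X : Set α}
    (hX : X ⊆ M.E) (hX4 : 4 ≤ X.ncard) : 3 ≤ rk M X := by
  have hfin : X.Finite := M.ground_finite.subset hX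
  obtain ⟨a, b, ha, hb, hab⟩ := (Set.one_lt_ncard_iff hfin).mp (by omega)
  have hrest : 1 < (X \ {a, b}).ncard := by
    rw [Set.ncard_sdiff (Set.insert_subset ha (Set.singleton_subset_iff.mpr hb)),
      Set.ncard_pair hab]
    omega
  obtain ⟨c, d, hc, hd, hcd⟩ := (Set.one_lt_ncard_iff (hfin.sdiff)).mp hrest
  simp only [Set.mem_sdiff, Set.mem_insert_iff, Set.mem_singleton_iff, not_or] at hc hd
  have key : ∀ x, x ∈ X → x ≠ a → x ≠ b → M.Indep {a, b, x} → 3 ≤ rk M X := by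
    intro x hx hxa hxb hI
    have h3 : ({a, b, x} : Set α).ncard = 3 :=
      Set.ncard_eq_three.mpr ⟨a, b, x, hab, Ne.symm hxa, Ne.symm hxb, rfl⟩
    exact h3 ▸ ncard_le_rk_of_indep hI (by simp [Set.insert_subset_iff, ha, hb, hx])
  by_cases hIc : M.Indep {a, b, c}
  · exact key c hc.1 hc.2.1 hc.2.2 hIc
  by_cases hId : M.Indep {a, b, d}
  · exact key d hd.1 hd.2.1 hd.2.2 hId
  exact absurd (hg.eq_of_not_indep (hX ha) (hX hb) (hX hc.1) (hX hd.1) hab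
    (Ne.symm hc.2.1) (Ne.symm hc.2.2) (Ne.symm hd.2.1) (Ne.symm hd.2.2) hIc hId) hcd

lemma hvec_eq_sum [Fintype α] (M : Matroid α) {i : ℕ} (hi : i ≤ rank M) :
    hvec M i = (-1) ^ i * ∑ A ∈ (Set.toFinite M.E).toFinset.powerset,
      (-1) ^ A.card * ((rank M - rk M (A : Set α)).choose (rank M - i) : ℤ) := by
  rw [hvec, if_pos hi, hPoly, finsetSum_coeff, Finset.mul_sum]
  refine Finset.sum_congr rfl fun A hA => ?_
  have hAE : (A : Set α) ⊆ M.E := by simpa using Finset.mem_powerset.mp hA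
  have hkr := rk_le_rank hAE
  have hkA : rk M A ≤ A.card := by simpa using rk_le_ncard (M := M) A.finite_toSet
  rw [show (-1 : ℤ[X]) ^ (A.card - rk M A) = C ((-1) ^ (A.card - rk M A)) by simp,
    coeff_mul_C, coeff_X_sub_one_pow]
  rcases le_or_gt (rk M A) i with hki | hik
  · have hexp : i + A.card = (rank M - rk M A - (rank M - i)) + (A.card - rk M A) + 2 * rk M A := by
      omega
    rw [← mul_assoc, mul_right_comm, ← pow_add, ← pow_add, hexp, pow_add _ _ (2 * _), pow_mul]
    simp
  · simp [Nat.choose_eq_zero_of_lt (show rank M - rk M A < rank M - i by omega)]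

lemma hvec_two_eq [Fintype α] {M : Matroid α} (hs : Simple M) (hg : IsGraphic M)
    (hr : 2 ≤ rank M) :
    hvec M 2 = (rank M).choose 2 - M.E.ncard * ((rank M : ℤ) - 1) + M.E.ncard.choose 2
      - {C : Set α | IsCircuit M C ∧ C.ncard = 3}.ncard := by
  set E := (Set.toFinite M.E).toFinset
  have hE : (E : Set α) = M.E := Set.Finite.coe_toFinset _
  have hEcard : E.card = M.E.ncard := (Set.ncard_eq_toFinset_card _ _).symm
  set f : ℕ → ℕ → ℤ := fun c k => (-1) ^ c * ((rank M - k).choose (rank M - 2) : ℤ) with hf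
  have hvanish : ∀ c k, 3 ≤ k → k ≤ rank M → f c k = 0 := fun c k hk hkr => by
    simp [hf, Nat.choose_eq_zero_of_lt (show rank M - k < rank M - 2 by omega)]
  rw [hvec_eq_sum M hr]
  change (-1) ^ 2 * ∑ A ∈ E.powerset, f A.card (rk M A) = _
  rw [sum_powerset_eq_sum_range_powersetCard E _ (N := 4) ?large]
  case large =>
    intro A hA h4
    have hAE : (A : Set α) ⊆ M.E := hE ▸ Finset.coe_subset.mpr hA
    exact hvanish _ _ (hg.three_le_rk hAE (by simpa using h4)) (rk_le_rank hAE)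
  simp only [Finset.sum_range_succ, Finset.sum_range_zero,
    hs.sum_powersetCard_of_le_two hE.subset f (by norm_num : 0 ≤ 2),
    hs.sum_powersetCard_of_le_two hE.subset f (by norm_num : 1 ≤ 2),
    hs.sum_powersetCard_of_le_two hE.subset f (by norm_num : 2 ≤ 2),
    hs.sum_powersetCard_three hE f (hvanish 3 3 le_rfl)]
  obtain ⟨q, hq⟩ := Nat.exists_eq_add_of_le' hr
  have h0 : f 0 0 = (rank M).choose 2 := by simp [hf, Nat.choose_symm hr]
  have h1 : f 1 1 = -((rank M : ℤ) - 1) := by simp [hf, hq]; ring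
  have h2 : f 2 2 = 1 := by simp [hf]
  have h3 : f 3 2 = -1 := by simp [hf]
  rw [h0, h1, h2, h3, hEcard, Nat.choose_zero_right, Nat.choose_one_right]
  ring

/-- Brylawski: for a simple graphic matroid of rank `r` on `n` elements,
`h_2 = C(n−r+1, 2) − t(M)` where `t(M)` is the number of 3-circuits. -/
theorem stmt13 [Fintype α] (M : Matroid α) (hs : Simple M) (hg : IsGraphic M)
    (n r : ℕ) (hn : M.E.ncard = n) (hr : rank M = r) (hr2 : 2 ≤ r) :
    hvec M 2 =
      ((n - r + 1).choose 2 : ℤ) - ({C : Set α | IsCircuit M C ∧ C.ncard = 3}.ncard : ℤ) := by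
  have hrn : r ≤ n := by
    rw [← hr, ← hn]
    exact rk_le_ncard M.ground_finite
  obtain ⟨m, rfl⟩ := Nat.exists_eq_add_of_le hrn
  rw [hvec_two_eq hs hg (hr ▸ hr2), hn, hr, Nat.add_sub_cancel_left,
    ← choose_two_sub_mul_add_choose_two r m]
  push_cast
  ring

end

end SPPaper
end
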